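/- In the instantaneous cluster-wise pseudo-SE setup, let F be a nonempty set of precoder tuples and let q̄ ∈ F, u ∈ ℂ^S, ρ ∈ (0,∞)^S. Define the block-coordinate updates: u'_k = b_k(q̄)/A_k(q̄), ρ'_k = (e_k(u'_k, q̄))^{-1} for each k ∈ S (note e_k(u'_k, q̄) ≥ σ²/A_k(q̄) > 0), and let q̄' ∈ F be any minimizer of q̃ ↦ J(ρ', u', q̃) over F. Then J(ρ', u', q̄') ≤ J(ρ', u', q̄) ≤ J(ρ, u, q̄); in particular the WMMSE objective value is non-increasing along one full iteration of the block coordinate descent. -/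

import Mathlib

open scoped BigOperators

noncomputable section

variable {S S' : Type*} [Fintype S] [Fintype S'] {n : ℕ}

/-- Effective desired-signal coefficient `b_k(q̄) = ⟪g_k, q̄_k⟫`. -/
def bCoef (g : S → EuclideanSpace ℂ (Fin n)) (q : S → EuclideanSpace ℂ (Fin n)) (k : S) : ℂ :=
  inner ℂ (g k) (q k)

/-- Total received power
`A_k(q̄) = ∑_{j∈S} |⟪g_k, q̄_j⟫|² + ∑_{j∈S'} |⟪g_j, q̄_k⟫|² + σ²`. -/
def Apow (g : S → EuclideanSpace ℂ (Fin n)) (h : S' → EuclideanSpace ℂ (Fin n)) (σ : ℝ)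
    (q : S → EuclideanSpace ℂ (Fin n)) (k : S) : ℝ :=
  (∑ j, ‖(inner ℂ (g k) (q j) : ℂ)‖ ^ 2) + (∑ j, ‖(inner ℂ (h j) (q k) : ℂ)‖ ^ 2) + σ ^ 2

/-- Interference-plus-leakage-plus-noise power `D_k(q̄) = A_k(q̄) - |b_k(q̄)|²`. -/
def Dpow (g : S → EuclideanSpace ℂ (Fin n)) (h : S' → EuclideanSpace ℂ (Fin n)) (σ : ℝ)
    (q : S → EuclideanSpace ℂ (Fin n)) (k : S) : ℝ :=
  Apow g h σ q k - ‖bCoef g q k‖ ^ 2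

/-- The hybrid SLINR `SLINR_k(q̄) = |b_k(q̄)|² / D_k(q̄)`. -/
def slinr (g : S → EuclideanSpace ℂ (Fin n)) (h : S' → EuclideanSpace ℂ (Fin n)) (σ : ℝ)
    (q : S → EuclideanSpace ℂ (Fin n)) (k : S) : ℝ :=
  ‖bCoef g q k‖ ^ 2 / Dpow g h σ q k

/-- Per-user MSE `e_k(u, q̄) = |u|² A_k(q̄) - 2 Re(conj u · b_k(q̄)) + 1`. -/
def mse (g : S → EuclideanSpace ℂ (Fin n)) (h : S' → EuclideanSpace ℂ (Fin n)) (σ : ℝ)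
    (q : S → EuclideanSpace ℂ (Fin n)) (k : S) (u : ℂ) : ℝ :=
  ‖u‖ ^ 2 * Apow g h σ q k - 2 * (starRingEnd ℂ u * bCoef g q k).re + 1

/-- WMMSE objective `J(ρ, u, q̄) = ∑_{k∈S} w_k (ρ_k e_k(u_k, q̄) - log ρ_k)`. -/
def Jobj (g : S → EuclideanSpace ℂ (Fin n)) (h : S' → EuclideanSpace ℂ (Fin n)) (σ : ℝ)
    (w : S → ℝ) (ρ : S → ℝ) (u : S → ℂ) (q : S → EuclideanSpace ℂ (Fin n)) : ℝ :=
  ∑ k, w k * (ρ k * mse g h σ q k (u k) - Real.log (ρ k))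

/-- Receiver-weight block update `u'_k = b_k(q̄)/A_k(q̄)`. -/
def uUpd (g : S → EuclideanSpace ℂ (Fin n)) (h : S' → EuclideanSpace ℂ (Fin n)) (σ : ℝ)
    (q : S → EuclideanSpace ℂ (Fin n)) (k : S) : ℂ :=
  bCoef g q k / ((Apow g h σ q k : ℝ) : ℂ)

/-- MSE-weight block update `ρ'_k = (e_k(u'_k, q̄))⁻¹`. -/
def ρUpd (g : S → EuclideanSpace ℂ (Fin n)) (h : S' → EuclideanSpace ℂ (Fin n)) (σ : ℝ)
    (q : S → EuclideanSpace ℂ (Fin n)) (k : S) : ℝ :=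
  (mse g h σ q k (uUpd g h σ q k))⁻¹


lemma Apow_ge (g : S → EuclideanSpace ℂ (Fin n)) (h : S' → EuclideanSpace ℂ (Fin n)) (σ : ℝ)
    (q : S → EuclideanSpace ℂ (Fin n)) (k : S) : σ ^ 2 ≤ Apow g h σ q k := by
  have h1 : (0:ℝ) ≤ ∑ j, ‖(inner ℂ (g k) (q j) : ℂ)‖ ^ 2 :=
    Finset.sum_nonneg fun j _ => sq_nonneg _
  have h2 : (0:ℝ) ≤ ∑ j, ‖(inner ℂ (h j) (q k) : ℂ)‖ ^ 2 :=
    Finset.sum_nonneg fun j _ => sq_nonneg _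
  unfold Apow; linarith

lemma b_le_Apow (g : S → EuclideanSpace ℂ (Fin n)) (h : S' → EuclideanSpace ℂ (Fin n)) (σ : ℝ)
    (q : S → EuclideanSpace ℂ (Fin n)) (k : S) :
    ‖bCoef g q k‖ ^ 2 + σ ^ 2 ≤ Apow g h σ q k := by
  have h1 : ‖bCoef g q k‖ ^ 2 ≤ ∑ j, ‖(inner ℂ (g k) (q j) : ℂ)‖ ^ 2 :=
    Finset.single_le_sum (f := fun j => ‖(inner ℂ (g k) (q j) : ℂ)‖ ^ 2)
      (fun j _ => sq_nonneg _) (Finset.mem_univ k)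
  have h2 : (0:ℝ) ≤ ∑ j, ‖(inner ℂ (h j) (q k) : ℂ)‖ ^ 2 :=
    Finset.sum_nonneg fun j _ => sq_nonneg _
  unfold bCoef at h1 ⊢; unfold Apow; linarith

lemma mse_eval (g : S → EuclideanSpace ℂ (Fin n)) (h : S' → EuclideanSpace ℂ (Fin n)) (σ : ℝ)
    (hσ : 0 < σ) (q : S → EuclideanSpace ℂ (Fin n)) (k : S) (u : ℂ) :
    mse g h σ q k u = ‖u‖ ^ 2 * Apow g h σ q k -
      2 * (u.re * (bCoef g q k).re + u.im * (bCoef g q k).im) + 1 := by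
  unfold mse
  congr 2
  simp [Complex.mul_re]

lemma mse_uUpd_eq (g : S → EuclideanSpace ℂ (Fin n)) (h : S' → EuclideanSpace ℂ (Fin n)) (σ : ℝ)
    (hσ : 0 < σ) (q : S → EuclideanSpace ℂ (Fin n)) (k : S) :
    mse g h σ q k (bCoef g q k / ((Apow g h σ q k : ℝ) : ℂ)) =
      1 - ‖bCoef g q k‖ ^ 2 / Apow g h σ q k := by
  have hA : 0 < Apow g h σ q k := lt_of_lt_of_le (by positivity) (Apow_ge g h σ q k)
  set A := Apow g h σ q k
  set b := bCoef g q k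
  have hAne : A ≠ 0 := ne_of_gt hA
  have hnorm : ‖b / ((A:ℝ):ℂ)‖ ^ 2 = ‖b‖ ^ 2 / A ^ 2 := by
    rw [norm_div, div_pow, Complex.norm_real, Real.norm_of_nonneg hA.le]
  have hre : (starRingEnd ℂ (b / ((A:ℝ):ℂ)) * b).re = ‖b‖ ^ 2 / A := by
    rw [map_div₀, Complex.conj_ofReal, div_mul_eq_mul_div, ← Complex.normSq_eq_conj_mul_self]
    rw [Complex.div_re]
    simp [Complex.normSq_ofReal, Complex.sq_norm]
    field_simp
  unfold mse
  rw [hnorm, hre]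
  field_simp
  ring

lemma mse_uUpd_min (g : S → EuclideanSpace ℂ (Fin n)) (h : S' → EuclideanSpace ℂ (Fin n)) (σ : ℝ)
    (hσ : 0 < σ) (q : S → EuclideanSpace ℂ (Fin n)) (k : S) (u : ℂ) :
    mse g h σ q k (bCoef g q k / ((Apow g h σ q k : ℝ) : ℂ)) ≤ mse g h σ q k u := by
  have hA : 0 < Apow g h σ q k := lt_of_lt_of_le (by positivity) (Apow_ge g h σ q k)
  rw [mse_uUpd_eq g h σ hσ q k, mse_eval g h σ hσ q k u]
  set A := Apow g h σ q k
  set b := bCoef g q k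
  have hb : ‖b‖ ^ 2 = b.re ^ 2 + b.im ^ 2 := by
    rw [Complex.sq_norm, Complex.normSq_apply]; ring
  have hu : ‖u‖ ^ 2 = u.re ^ 2 + u.im ^ 2 := by
    rw [Complex.sq_norm, Complex.normSq_apply]; ring
  rw [hb, hu]
  have h2 : (b.re ^ 2 + b.im ^ 2) / A * A = b.re ^ 2 + b.im ^ 2 :=
    div_mul_cancel₀ _ hA.ne'
  nlinarith [sq_nonneg (u.re * A - b.re), sq_nonneg (u.im * A - b.im), hA, h2]

/-- One full iteration of the block coordinate descent on the WMMSE objective is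
non-increasing: with `u'_k = b_k(q̄)/A_k(q̄)`, `ρ'_k = (e_k(u'_k, q̄))⁻¹`
(noting `e_k(u'_k, q̄) ≥ σ²/A_k(q̄) > 0`), and `q̄' ∈ F` any minimizer of
`q̃ ↦ J(ρ', u', q̃)` over `F`, one has `J(ρ', u', q̄') ≤ J(ρ', u', q̄) ≤ J(ρ, u, q̄)`. -/
theorem wmmse_bcd_monotone (g : S → EuclideanSpace ℂ (Fin n))
    (h : S' → EuclideanSpace ℂ (Fin n)) (σ : ℝ) (hσ : 0 < σ)
    (w : S → ℝ) (hw : ∀ k, 0 < w k)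
    (F : Set (S → EuclideanSpace ℂ (Fin n))) (hF : F.Nonempty)
    (qbar : S → EuclideanSpace ℂ (Fin n)) (hqbar : qbar ∈ F)
    (u : S → ℂ) (ρ : S → ℝ) (hρ : ∀ k, 0 < ρ k)
    (qbar' : S → EuclideanSpace ℂ (Fin n)) (hqbar' : qbar' ∈ F)
    (hmin : ∀ q ∈ F, Jobj g h σ w (ρUpd g h σ qbar) (uUpd g h σ qbar) qbar' ≤
      Jobj g h σ w (ρUpd g h σ qbar) (uUpd g h σ qbar) q) :
    (∀ k, 0 < σ ^ 2 / Apow g h σ qbar k ∧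
        σ ^ 2 / Apow g h σ qbar k ≤ mse g h σ qbar k (uUpd g h σ qbar k)) ∧
    Jobj g h σ w (ρUpd g h σ qbar) (uUpd g h σ qbar) qbar' ≤
      Jobj g h σ w (ρUpd g h σ qbar) (uUpd g h σ qbar) qbar ∧
    Jobj g h σ w (ρUpd g h σ qbar) (uUpd g h σ qbar) qbar ≤ Jobj g h σ w ρ u qbar := by
  have hApos : ∀ k, 0 < Apow g h σ qbar k := fun k =>
    lt_of_lt_of_le (by positivity) (Apow_ge g h σ qbar k)
  have hmse' : ∀ k, σ ^ 2 / Apow g h σ qbar k ≤ mse g h σ qbar k (uUpd g h σ qbar k) := by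
    intro k
    rw [show uUpd g h σ qbar k = bCoef g qbar k / ((Apow g h σ qbar k : ℝ) : ℂ) from rfl,
      mse_uUpd_eq g h σ hσ qbar k]
    have hb := b_le_Apow g h σ qbar k
    have hA := hApos k
    rw [div_le_iff₀ hA, sub_mul, div_mul_cancel₀ _ hA.ne']
    linarith
  have hpart1 : ∀ k, 0 < σ ^ 2 / Apow g h σ qbar k ∧
      σ ^ 2 / Apow g h σ qbar k ≤ mse g h σ qbar k (uUpd g h σ qbar k) := fun k =>
    ⟨div_pos (by positivity) (hApos k), hmse' k⟩
  refine ⟨hpart1, hmin qbar hqbar, ?_⟩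
  unfold Jobj
  apply Finset.sum_le_sum
  intro k _
  have hA := hApos k
  set e' := mse g h σ qbar k (uUpd g h σ qbar k) with he'
  have he'pos : 0 < e' := lt_of_lt_of_le (div_pos (by positivity) hA) (hmse' k)
  have hle : e' ≤ mse g h σ qbar k (u k) := mse_uUpd_min g h σ hσ qbar k (u k)
  have hρk := hρ k
  have hρUpd : ρUpd g h σ qbar k = e'⁻¹ := rfl
  rw [hρUpd]
  have h1 : e'⁻¹ * e' = 1 := inv_mul_cancel₀ he'pos.ne'
  have h2 : Real.log e'⁻¹ = -Real.log e' := Real.log_inv e'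
  have h3 : Real.log (ρ k * e') ≤ ρ k * e' - 1 :=
    Real.log_le_sub_one_of_pos (mul_pos hρk he'pos)
  rw [Real.log_mul hρk.ne' he'pos.ne'] at h3
  have h4 : ρ k * e' ≤ ρ k * mse g h σ qbar k (u k) :=
    mul_le_mul_of_nonneg_left hle hρk.le
  have : e'⁻¹ * e' - Real.log e'⁻¹ ≤ ρ k * mse g h σ qbar k (u k) - Real.log (ρ k) := by
    rw [h1, h2]; linarith
  exact mul_le_mul_of_nonneg_left this (hw k).le

end
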